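/- Assume Assumption 1 (continuity) and fix β ∈ (0,K). For any minimizer (λ*,γ*) of H over Δ, the β-specific oracle Γ*_β(x,s) := {k ∈ [K] : p_k(x,s) ≥ λ* + γ*_{k,s}/π_s} has expected size exactly β: 𝒯(Γ*_β) = β. -/

import Mathlib

open MeasureTheory Set Filter

noncomputable section

section Defs

variable {𝒳 𝒮 : Type*} [MeasurableSpace 𝒳] [MeasurableSpace 𝒮] {K : ℕ}

/-- `π_s := ℙ(S = s)`. -/
def probS (μ : Measure (𝒳 × 𝒮 × Fin K)) (s : 𝒮) : ℝ :=
  (μ {ω | ω.2.1 = s}).toReal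

/-- `ℙ(A | S = s) := ℙ(A ∩ {S = s}) / π_s`. -/
def condProb (μ : Measure (𝒳 × 𝒮 × Fin K)) (A : Set (𝒳 × 𝒮 × Fin K)) (s : 𝒮) : ℝ :=
  (μ (A ∩ {ω | ω.2.1 = s})).toReal / probS μ s

/-- Conditional expectation `E[f(X,S,Y) | S = s]`. -/
def condMean (μ : Measure (𝒳 × 𝒮 × Fin K)) (f : 𝒳 × 𝒮 × Fin K → ℝ) (s : 𝒮) : ℝ :=
  (∫ ω in {ω : 𝒳 × 𝒮 × Fin K | ω.2.1 = s}, f ω ∂μ) / probS μ s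

/-- The event `{k ∈ Γ(X,S)}`. -/
def memEvent (Γ : 𝒳 → 𝒮 → Set (Fin K)) (k : Fin K) : Set (𝒳 × 𝒮 × Fin K) :=
  {ω | k ∈ Γ ω.1 ω.2.1}

/-- A set-valued classifier: each membership set is measurable. -/
def IsClassifier (Γ : 𝒳 → 𝒮 → Set (Fin K)) : Prop :=
  ∀ k : Fin K, MeasurableSet {q : 𝒳 × 𝒮 | k ∈ Γ q.1 q.2}

/-- Risk `R(Γ) := ℙ(Y ∉ Γ(X,S))`. -/
def risk (μ : Measure (𝒳 × 𝒮 × Fin K)) (Γ : 𝒳 → 𝒮 → Set (Fin K)) : ℝ :=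
  (μ {ω | ω.2.2 ∉ Γ ω.1 ω.2.1}).toReal

/-- Expected size `𝒯(Γ) := E[|Γ(X,S)|]`. -/
def expSize (μ : Measure (𝒳 × 𝒮 × Fin K)) (Γ : 𝒳 → 𝒮 → Set (Fin K)) : ℝ :=
  ∫ ω, ((Γ ω.1 ω.2.1).ncard : ℝ) ∂μ

/-- Demographic parity: `ℙ(k ∈ Γ(X,S) | S = s) = ℙ(k ∈ Γ(X,S))` for all `k, s`. -/
def DPfair (μ : Measure (𝒳 × 𝒮 × Fin K)) (Γ : 𝒳 → 𝒮 → Set (Fin K)) : Prop :=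
  ∀ (k : Fin K) (s : 𝒮), condProb μ (memEvent Γ k) s = (μ (memEvent Γ k)).toReal

/-- Unfairness measure `𝒰(Γ)`. -/
def unfairness (μ : Measure (𝒳 × 𝒮 × Fin K)) (Γ : 𝒳 → 𝒮 → Set (Fin K)) : ℝ :=
  ⨆ k : Fin K, ⨆ s : 𝒮, ⨆ s' : 𝒮,
    |condProb μ (memEvent Γ k) s - condProb μ (memEvent Γ k) s'|

/-- Conditional cdf `F_{k,s}(t) := ℙ(p_k(X,S) ≤ t | S = s)`. -/
def Fks (μ : Measure (𝒳 × 𝒮 × Fin K)) (p : Fin K → 𝒳 → 𝒮 → ℝ) (k : Fin K) (s : 𝒮) (t : ℝ) : ℝ :=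
  condProb μ {ω | p k ω.1 ω.2.1 ≤ t} s

/-- cdf `F_k(t) := ℙ(p_k(X,S) ≤ t)`. -/
def Fk (μ : Measure (𝒳 × 𝒮 × Fin K)) (p : Fin K → 𝒳 → 𝒮 → ℝ) (k : Fin K) (t : ℝ) : ℝ :=
  (μ {ω | p k ω.1 ω.2.1 ≤ t}).toReal

/-- `G(t) := Σ_k (1 - F_k(t))`. -/
def Gfun (μ : Measure (𝒳 × 𝒮 × Fin K)) (p : Fin K → 𝒳 → 𝒮 → ℝ) (t : ℝ) : ℝ :=
  ∑ k : Fin K, (1 - Fk μ p k t)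

/-- Assumption 1 (continuity of all the conditional cdfs `F_{k,s}`). -/
def Assumption1 (μ : Measure (𝒳 × 𝒮 × Fin K)) (p : Fin K → 𝒳 → 𝒮 → ℝ) : Prop :=
  ∀ (k : Fin K) (s : 𝒮), Continuous (fun t => Fks μ p k s t)

/-- Thresholding (oracle) classifier `{k : p_k(x,s) ≥ λ + γ_{k,s}/π_s}`. -/
def oracle (μ : Measure (𝒳 × 𝒮 × Fin K)) (p : Fin K → 𝒳 → 𝒮 → ℝ)
    (lam : ℝ) (γ : Fin K → 𝒮 → ℝ) : 𝒳 → 𝒮 → Set (Fin K) :=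
  fun x s => {k | lam + γ k s / probS μ s ≤ p k x s}

/-- The objective `H(λ,γ)`. -/
def Hfun [Fintype 𝒮] (μ : Measure (𝒳 × 𝒮 × Fin K)) (p : Fin K → 𝒳 → 𝒮 → ℝ) (β : ℝ)
    (lam : ℝ) (γ : Fin K → 𝒮 → ℝ) : ℝ :=
  (∑ k : Fin K, ∑ s : 𝒮,
      condMean μ (fun ω => max (probS μ s * (p k ω.1 ω.2.1 - lam) - γ k s) 0) s) + lam * β

/-- Lagrangian risk `R_{λ,γ}(Γ)`. -/
def lagRisk [Fintype 𝒮] (μ : Measure (𝒳 × 𝒮 × Fin K)) (β lam : ℝ) (γ : Fin K → 𝒮 → ℝ)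
    (Γ : 𝒳 → 𝒮 → Set (Fin K)) : ℝ :=
  risk μ Γ + lam * (expSize μ Γ - β) +
    ∑ k : Fin K, ∑ s : 𝒮, γ k s * condProb μ (memEvent Γ k) s

end Defs

/-- Generalized inverse `h⁻¹(u) := inf {t | h t ≤ u}` of a nonincreasing function. -/
def ginv (h : ℝ → ℝ) (u : ℝ) : ℝ := sInf {t | h t ≤ u}

/-- The constraint set `Δ`. -/
def Δset (K : ℕ) (𝒮 : Type*) [Fintype 𝒮] : Set (ℝ × (Fin K → 𝒮 → ℝ)) :=
  {q | 0 ≤ q.1 ∧ ∀ k : Fin K, ∑ s : 𝒮, q.2 k s = 0}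


section Aux2025

set_option linter.unusedSectionVars false

variable {𝒳 𝒮 : Type*} [MeasurableSpace 𝒳] [MeasurableSpace 𝒮] [MeasurableSingletonClass 𝒮]
  {K : ℕ}

/-- `φ_{k,s}(t) = μ({p_k ≥ t} ∩ {S = s})`. -/
def phiF (μ : Measure (𝒳 × 𝒮 × Fin K)) (p : Fin K → 𝒳 → 𝒮 → ℝ) (k : Fin K) (s : 𝒮) (t : ℝ) : ℝ :=
  (μ ({ω | t ≤ p k ω.1 ω.2.1} ∩ {ω | ω.2.1 = s})).toReal

lemma meas_pk {p : Fin K → 𝒳 → 𝒮 → ℝ} (hpmeas : ∀ k, Measurable fun q : 𝒳 × 𝒮 => p k q.1 q.2)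
    (k : Fin K) : Measurable fun ω : 𝒳 × 𝒮 × Fin K => p k ω.1 ω.2.1 :=
  (hpmeas k).comp (measurable_fst.prodMk (measurable_fst.comp measurable_snd))

lemma meas_Ss (s : 𝒮) : MeasurableSet {ω : 𝒳 × 𝒮 × Fin K | ω.2.1 = s} :=
  (measurable_fst.comp measurable_snd) (measurableSet_singleton s)

lemma meas_le {p : Fin K → 𝒳 → 𝒮 → ℝ} (hpmeas : ∀ k, Measurable fun q : 𝒳 × 𝒮 => p k q.1 q.2)
    (k : Fin K) (t : ℝ) : MeasurableSet {ω : 𝒳 × 𝒮 × Fin K | p k ω.1 ω.2.1 ≤ t} :=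
  measurableSet_le (meas_pk hpmeas k) measurable_const

lemma Fks_def (μ : Measure (𝒳 × 𝒮 × Fin K)) (p : Fin K → 𝒳 → 𝒮 → ℝ) (k : Fin K) (s : 𝒮) (t : ℝ) :
    Fks μ p k s t
      = (μ ({ω | p k ω.1 ω.2.1 ≤ t} ∩ {ω | ω.2.1 = s})).toReal / probS μ s := rfl

lemma Fle_toReal (μ : Measure (𝒳 × 𝒮 × Fin K)) [IsProbabilityMeasure μ]
    (p : Fin K → 𝒳 → 𝒮 → ℝ) (k : Fin K) (s : 𝒮) (hπ : 0 < probS μ s) (t : ℝ) :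
    (μ ({ω | p k ω.1 ω.2.1 ≤ t} ∩ {ω | ω.2.1 = s})).toReal = Fks μ p k s t * probS μ s := by
  rw [Fks_def]
  field_simp

/-- no atoms, given continuity of the conditional cdf. -/
lemma atomfree (μ : Measure (𝒳 × 𝒮 × Fin K)) [IsProbabilityMeasure μ]
    (p : Fin K → 𝒳 → 𝒮 → ℝ) (hpmeas : ∀ k, Measurable fun q : 𝒳 × 𝒮 => p k q.1 q.2)
    (k : Fin K) (s : 𝒮) (hπ : 0 < probS μ s)
    (hcont : Continuous (fun t => Fks μ p k s t)) (t : ℝ) :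
    (μ ({ω | p k ω.1 ω.2.1 = t} ∩ {ω | ω.2.1 = s})).toReal = 0 := by
  set x := (μ ({ω | p k ω.1 ω.2.1 = t} ∩ {ω | ω.2.1 = s})).toReal with hx
  have hbound : ∀ n : ℕ, x ≤ probS μ s * (Fks μ p k s t - Fks μ p k s (t - 1/(n+1))) := by
    intro n
    set t' := t - 1/((n:ℝ)+1) with ht'
    have ht'lt : t' < t := sub_lt_self t (by positivity)
    have hsub : {ω : 𝒳 × 𝒮 × Fin K | p k ω.1 ω.2.1 = t} ∩ {ω | ω.2.1 = s}
        ⊆ ({ω | p k ω.1 ω.2.1 ≤ t} ∩ {ω | ω.2.1 = s}) \ ({ω | p k ω.1 ω.2.1 ≤ t'} ∩ {ω | ω.2.1 = s}) := by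
      rintro ω ⟨h1, h2⟩
      refine ⟨⟨le_of_eq h1, h2⟩, ?_⟩
      rintro ⟨h3, -⟩
      rw [Set.mem_setOf_eq] at h1
      rw [Set.mem_setOf_eq] at h3
      linarith
    have hsub2 : ({ω : 𝒳 × 𝒮 × Fin K | p k ω.1 ω.2.1 ≤ t'} ∩ {ω | ω.2.1 = s})
        ⊆ ({ω | p k ω.1 ω.2.1 ≤ t} ∩ {ω | ω.2.1 = s}) :=
      fun ω ⟨h1, h2⟩ => ⟨le_trans h1 ht'lt.le, h2⟩
    have hdiff := measure_diff hsub2 ((meas_le hpmeas k t').inter (meas_Ss s)).nullMeasurableSet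
      (measure_ne_top μ _)
    calc x ≤ (μ (({ω | p k ω.1 ω.2.1 ≤ t} ∩ {ω | ω.2.1 = s}) \ ({ω | p k ω.1 ω.2.1 ≤ t'} ∩ {ω | ω.2.1 = s}))).toReal :=
            ENNReal.toReal_mono (measure_ne_top μ _) (measure_mono hsub)
      _ = probS μ s * (Fks μ p k s t - Fks μ p k s t') := by
            rw [hdiff, ENNReal.toReal_sub_of_le (measure_mono hsub2) (measure_ne_top μ _),
              Fle_toReal μ p k s hπ, Fle_toReal μ p k s hπ]
            ring
  have htend : Filter.Tendsto (fun n : ℕ => probS μ s * (Fks μ p k s t - Fks μ p k s (t - 1/(n+1))))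
      Filter.atTop (nhds 0) := by
    have h1 : Filter.Tendsto (fun n : ℕ => t - 1/((n:ℝ)+1)) Filter.atTop (nhds t) := by
      have := tendsto_one_div_add_atTop_nhds_zero_nat (𝕜 := ℝ)
      have h2 := Filter.Tendsto.const_sub t this
      simpa using h2
    have h3 : Filter.Tendsto (fun n : ℕ => Fks μ p k s (t - 1/(n+1))) Filter.atTop
        (nhds (Fks μ p k s t)) := hcont.continuousAt.tendsto.comp h1
    have h4 := ((tendsto_const_nhds (x := Fks μ p k s t)).sub h3).const_mul (probS μ s)
    simpa using h4
  have hle : x ≤ 0 := ge_of_tendsto' htend hbound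
  exact le_antisymm hle ENNReal.toReal_nonneg

/-- `φ = π (1 - F)`. -/
lemma phi_eq (μ : Measure (𝒳 × 𝒮 × Fin K)) [IsProbabilityMeasure μ]
    (p : Fin K → 𝒳 → 𝒮 → ℝ) (hpmeas : ∀ k, Measurable fun q : 𝒳 × 𝒮 => p k q.1 q.2)
    (k : Fin K) (s : 𝒮) (hπ : 0 < probS μ s)
    (hcont : Continuous (fun t => Fks μ p k s t)) (t : ℝ) :
    phiF μ p k s t = probS μ s * (1 - Fks μ p k s t) := by
  have hunion : ({ω : 𝒳 × 𝒮 × Fin K | p k ω.1 ω.2.1 ≤ t} ∩ {ω | ω.2.1 = s})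
      ∪ ({ω | t ≤ p k ω.1 ω.2.1} ∩ {ω | ω.2.1 = s}) = {ω | ω.2.1 = s} := by
    ext ω
    constructor
    · rintro (⟨-, h⟩ | ⟨-, h⟩) <;> exact h
    · intro h
      rcases le_total (p k ω.1 ω.2.1) t with h' | h'
      · exact Or.inl ⟨h', h⟩
      · exact Or.inr ⟨h', h⟩
  have hinter : ({ω : 𝒳 × 𝒮 × Fin K | p k ω.1 ω.2.1 ≤ t} ∩ {ω | ω.2.1 = s})
      ∩ ({ω | t ≤ p k ω.1 ω.2.1} ∩ {ω | ω.2.1 = s})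
      = {ω | p k ω.1 ω.2.1 = t} ∩ {ω | ω.2.1 = s} := by
    ext ω
    constructor
    · rintro ⟨⟨h1, h2⟩, ⟨h3, -⟩⟩
      exact ⟨le_antisymm h1 h3, h2⟩
    · rintro ⟨h1, h2⟩
      rw [Set.mem_setOf_eq] at h1
      exact ⟨⟨le_of_eq h1, h2⟩, ⟨ge_of_eq h1, h2⟩⟩
  have key := measure_union_add_inter (μ := μ)
    (t := {ω : 𝒳 × 𝒮 × Fin K | t ≤ p k ω.1 ω.2.1} ∩ {ω | ω.2.1 = s})
    ({ω : 𝒳 × 𝒮 × Fin K | p k ω.1 ω.2.1 ≤ t} ∩ {ω | ω.2.1 = s})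
    (((measurableSet_le measurable_const (meas_pk hpmeas k))).inter (meas_Ss s))
  rw [hunion, hinter] at key
  have key2 := congrArg ENNReal.toReal key
  rw [ENNReal.toReal_add (measure_ne_top μ _) (measure_ne_top μ _),
    ENNReal.toReal_add (measure_ne_top μ _) (measure_ne_top μ _)] at key2
  have hz := atomfree μ p hpmeas k s hπ hcont t
  have hF := Fle_toReal μ p k s hπ t
  have hcomb : probS μ s + 0 = Fks μ p k s t * probS μ s + phiF μ p k s t := by
    rw [← hz, ← hF]
    exact key2
  unfold phiF at *
  linear_combination -hcomb

/-- Integrability of the hinge integrand. -/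
lemma int_max (μ : Measure (𝒳 × 𝒮 × Fin K)) [IsProbabilityMeasure μ]
    (p : Fin K → 𝒳 → 𝒮 → ℝ) (hpmeas : ∀ k, Measurable fun q : 𝒳 × 𝒮 => p k q.1 q.2)
    (hp01 : ∀ k x s, p k x s ∈ Icc (0:ℝ) 1) (k : Fin K) (s : 𝒮) (c θ g : ℝ) :
    Integrable (fun ω : 𝒳 × 𝒮 × Fin K => max (c * (p k ω.1 ω.2.1 - θ) - g) 0)
      (μ.restrict {ω | ω.2.1 = s}) := by
  refine Integrable.mono' (integrable_const (|c| * (1 + |θ|) + |g|)) ?_ ?_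
  · exact (((meas_pk hpmeas k).sub measurable_const).const_mul c |>.sub
      measurable_const).max measurable_const |>.aestronglyMeasurable
  · refine Filter.Eventually.of_forall (fun ω => ?_)
    have h1 : |max (c * (p k ω.1 ω.2.1 - θ) - g) 0| ≤ |c * (p k ω.1 ω.2.1 - θ) - g| := by
      rw [abs_of_nonneg (le_max_right _ _)]
      exact max_le (le_abs_self _) (abs_nonneg _)
    have h2 : |c * (p k ω.1 ω.2.1 - θ) - g| ≤ |c| * (1 + |θ|) + |g| := by
      have h3 : |c * (p k ω.1 ω.2.1 - θ)| ≤ |c| * (1 + |θ|) := by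
        rw [abs_mul]
        refine mul_le_mul_of_nonneg_left ?_ (abs_nonneg c)
        have h4 := (hp01 k ω.1 ω.2.1).1
        have h5 := (hp01 k ω.1 ω.2.1).2
        rw [abs_sub_comm]
        calc |θ - p k ω.1 ω.2.1| ≤ |θ| + |p k ω.1 ω.2.1| := abs_sub _ _
          _ ≤ |θ| + 1 := by
              have : |p k ω.1 ω.2.1| ≤ 1 := abs_le.2 ⟨by linarith, h5⟩
              linarith
          _ = 1 + |θ| := by ring
      calc |c * (p k ω.1 ω.2.1 - θ) - g| ≤ |c * (p k ω.1 ω.2.1 - θ)| + |g| := abs_sub _ _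
        _ ≤ |c| * (1 + |θ|) + |g| := by linarith
    simp only [Real.norm_eq_abs]
    exact le_trans h1 h2

/-- Key integral bound: shifting the hinge down by `δ` costs at least `δ·φ`. -/
lemma Ibound (μ : Measure (𝒳 × 𝒮 × Fin K)) [IsProbabilityMeasure μ]
    (p : Fin K → 𝒳 → 𝒮 → ℝ) (hpmeas : ∀ k, Measurable fun q : 𝒳 × 𝒮 => p k q.1 q.2)
    (hp01 : ∀ k x s, p k x s ∈ Icc (0:ℝ) 1) (k : Fin K) (s : 𝒮) (hπ : 0 < probS μ s)
    (θ g δ : ℝ) :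
    ∫ ω in {ω : 𝒳 × 𝒮 × Fin K | ω.2.1 = s},
        max (probS μ s * (p k ω.1 ω.2.1 - θ) - g - δ) 0 ∂μ
      ≤ (∫ ω in {ω : 𝒳 × 𝒮 × Fin K | ω.2.1 = s},
          max (probS μ s * (p k ω.1 ω.2.1 - θ) - g) 0 ∂μ)
        - δ * phiF μ p k s (θ + (g + δ) / probS μ s) := by
  set π := probS μ s with hπdef
  set A : Set (𝒳 × 𝒮 × Fin K) := {ω | θ + (g + δ) / π ≤ p k ω.1 ω.2.1} with hA
  have hAmeas : MeasurableSet A := measurableSet_le measurable_const (meas_pk hpmeas k)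
  have hmemA : ∀ ω : 𝒳 × 𝒮 × Fin K, ω ∈ A ↔ δ ≤ π * (p k ω.1 ω.2.1 - θ) - g := by
    intro ω
    rw [hA, Set.mem_setOf_eq]
    have h1 : θ + (g + δ) / π ≤ p k ω.1 ω.2.1 ↔ (g + δ) / π ≤ p k ω.1 ω.2.1 - θ := by
      constructor <;> intro h <;> linarith
    rw [h1, div_le_iff₀ hπ]
    constructor <;> intro h <;> nlinarith
  have hpoint : ∀ ω : 𝒳 × 𝒮 × Fin K,
      max (π * (p k ω.1 ω.2.1 - θ) - g - δ) 0
        ≤ max (π * (p k ω.1 ω.2.1 - θ) - g) 0 - A.indicator (fun _ => δ) ω := by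
    intro ω
    by_cases h : ω ∈ A
    · rw [Set.indicator_of_mem h]
      have hδa := (hmemA ω).1 h
      have he : max (π * (p k ω.1 ω.2.1 - θ) - g - δ) 0 = π * (p k ω.1 ω.2.1 - θ) - g - δ :=
        max_eq_left (by linarith)
      rw [he]
      have := le_max_left (π * (p k ω.1 ω.2.1 - θ) - g) 0
      linarith
    · rw [Set.indicator_of_notMem h]
      have hδa : π * (p k ω.1 ω.2.1 - θ) - g < δ := by
        by_contra h'
        exact h ((hmemA ω).2 (not_lt.1 h'))
      have he : max (π * (p k ω.1 ω.2.1 - θ) - g - δ) 0 = 0 := max_eq_right (by linarith)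
      rw [he]
      have := le_max_right (π * (p k ω.1 ω.2.1 - θ) - g) 0
      linarith
  have hint1 : Integrable (fun ω : 𝒳 × 𝒮 × Fin K => max (π * (p k ω.1 ω.2.1 - θ) - g - δ) 0)
      (μ.restrict {ω | ω.2.1 = s}) := by
    have := int_max μ p hpmeas hp01 k s π θ (g + δ)
    refine this.congr ?_
    refine Filter.Eventually.of_forall (fun ω => ?_)
    ring_nf
  have hint2 : Integrable (fun ω : 𝒳 × 𝒮 × Fin K => max (π * (p k ω.1 ω.2.1 - θ) - g) 0)
      (μ.restrict {ω | ω.2.1 = s}) := int_max μ p hpmeas hp01 k s π θ g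
  have hint3 : Integrable (fun ω : 𝒳 × 𝒮 × Fin K => A.indicator (fun _ => δ) ω)
      (μ.restrict {ω | ω.2.1 = s}) :=
    (integrable_const δ).indicator hAmeas
  have hmono := integral_mono hint1 (hint2.sub hint3) hpoint
  simp only [Pi.sub_apply] at hmono
  rw [integral_sub hint2 hint3] at hmono
  have hind : ∫ ω in {ω : 𝒳 × 𝒮 × Fin K | ω.2.1 = s}, A.indicator (fun _ => δ) ω ∂μ
      = δ * phiF μ p k s (θ + (g + δ) / π) := by
    rw [setIntegral_indicator hAmeas, setIntegral_const]
    rw [smul_eq_mul, mul_comm]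
    congr 1
    unfold phiF
    congr 1
    rw [Set.inter_comm]
  rw [hind] at hmono
  exact hmono

/-- The conditional-mean comparison used to bound differences of `H`. -/
lemma condMean_bound (μ : Measure (𝒳 × 𝒮 × Fin K)) [IsProbabilityMeasure μ]
    (p : Fin K → 𝒳 → 𝒮 → ℝ) (hpmeas : ∀ k, Measurable fun q : 𝒳 × 𝒮 => p k q.1 q.2)
    (hp01 : ∀ k x s, p k x s ∈ Icc (0:ℝ) 1) (k : Fin K) (s : 𝒮) (hπ : 0 < probS μ s)
    (θ θ' g g' : ℝ) :
    condMean μ (fun ω => max (probS μ s * (p k ω.1 ω.2.1 - θ') - g') 0) s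
      ≤ condMean μ (fun ω => max (probS μ s * (p k ω.1 ω.2.1 - θ) - g) 0) s
        - ((θ' - θ) + (g' - g) / probS μ s) * phiF μ p k s (θ' + g' / probS μ s) := by
  have hπne : probS μ s ≠ 0 := ne_of_gt hπ
  set π := probS μ s with hπdef
  set δ := π * (θ' - θ) + (g' - g) with hδ
  have hfun : (fun ω : 𝒳 × 𝒮 × Fin K => max (π * (p k ω.1 ω.2.1 - θ') - g') 0)
      = fun ω => max (π * (p k ω.1 ω.2.1 - θ) - g - δ) 0 := by
    funext ω
    congr 1
    rw [hδ]
    ring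
  have harg : θ + (g + δ) / π = θ' + g' / π := by
    rw [hδ]
    field_simp
    ring
  have hIb := Ibound μ p hpmeas hp01 k s hπ θ g δ
  rw [harg] at hIb
  unfold condMean
  rw [hfun]
  have hstep : (∫ ω in {ω : 𝒳 × 𝒮 × Fin K | ω.2.1 = s},
      max (π * (p k ω.1 ω.2.1 - θ) - g - δ) 0 ∂μ) / π
      ≤ ((∫ ω in {ω : 𝒳 × 𝒮 × Fin K | ω.2.1 = s},
          max (π * (p k ω.1 ω.2.1 - θ) - g) 0 ∂μ) - δ * phiF μ p k s (θ' + g' / π)) / π := by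
    gcongr
  refine le_trans hstep ?_
  rw [sub_div]
  have hgen : ∀ Φ : ℝ, δ * Φ / π = ((θ' - θ) + (g' - g) / π) * Φ := by
    intro Φ
    rw [hδ]
    field_simp
  rw [hgen]

/-- partition of the measure of a set along values of S -/
lemma measure_decomp [Fintype 𝒮] (μ : Measure (𝒳 × 𝒮 × Fin K)) [IsProbabilityMeasure μ]
    (A : Set (𝒳 × 𝒮 × Fin K)) (hA : MeasurableSet A) :
    (μ A).toReal = ∑ s : 𝒮, (μ (A ∩ {ω | ω.2.1 = s})).toReal := by
  have hdisj : Set.PairwiseDisjoint (↑(Finset.univ : Finset 𝒮))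
      (fun s => A ∩ {ω : 𝒳 × 𝒮 × Fin K | ω.2.1 = s}) := by
    intro a _ b _ hab
    rw [Function.onFun, Set.disjoint_left]
    rintro ω ⟨-, h1⟩ ⟨-, h2⟩
    exact hab ((h1 : ω.2.1 = a) ▸ (h2 : ω.2.1 = b) ▸ rfl)
  have hcover : ⋃ s ∈ (Finset.univ : Finset 𝒮), (A ∩ {ω : 𝒳 × 𝒮 × Fin K | ω.2.1 = s}) = A := by
    ext ω
    simp only [Set.mem_iUnion, Finset.mem_univ, exists_prop, true_and, Set.mem_inter_iff,
      Set.mem_setOf_eq]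
    constructor
    · rintro ⟨s, hs, -⟩; exact hs
    · intro h; exact ⟨ω.2.1, h, rfl⟩
  have := measure_biUnion_finset (μ := μ) hdisj (fun s _ => hA.inter (meas_Ss s))
  rw [hcover] at this
  rw [this, ENNReal.toReal_sum (fun s _ => measure_ne_top μ _)]

lemma sum_probS [Fintype 𝒮] (μ : Measure (𝒳 × 𝒮 × Fin K)) [IsProbabilityMeasure μ] :
    ∑ s : 𝒮, probS μ s = 1 := by
  have := measure_decomp μ Set.univ MeasurableSet.univ
  simp only [Set.univ_inter, measure_univ, ENNReal.toReal_one] at this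
  unfold probS
  exact this.symm

lemma ncard_setOf {K : ℕ} (P : Fin K → Prop) [DecidablePred P] :
    ({k | P k} : Set (Fin K)).ncard = ∑ k : Fin K, if P k then 1 else 0 := by
  have h1 : ({k | P k} : Set (Fin K)) = ↑(Finset.univ.filter P) := by
    ext k; simp
  rw [h1, Set.ncard_coe_finset, Finset.card_filter]

/-- expected size of the oracle as a double sum of φ's. -/
lemma expSize_oracle [Fintype 𝒮] (μ : Measure (𝒳 × 𝒮 × Fin K)) [IsProbabilityMeasure μ]
    (p : Fin K → 𝒳 → 𝒮 → ℝ) (hpmeas : ∀ k, Measurable fun q : 𝒳 × 𝒮 => p k q.1 q.2)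
    (lam : ℝ) (γ : Fin K → 𝒮 → ℝ) :
    expSize μ (oracle μ p lam γ)
      = ∑ k : Fin K, ∑ s : 𝒮, phiF μ p k s (lam + γ k s / probS μ s) := by
  classical
  have hBmeas : ∀ k : Fin K, MeasurableSet
      {ω : 𝒳 × 𝒮 × Fin K | lam + γ k ω.2.1 / probS μ ω.2.1 ≤ p k ω.1 ω.2.1} := by
    intro k
    exact measurableSet_le
      ((measurable_of_countable (fun s : 𝒮 => lam + γ k s / probS μ s)).comp
        (measurable_fst.comp measurable_snd))
      (meas_pk hpmeas k)
  have hfun : (fun ω : 𝒳 × 𝒮 × Fin K =>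
        ((oracle μ p lam γ ω.1 ω.2.1).ncard : ℝ))
      = fun ω => ∑ k : Fin K,
          ({ω' : 𝒳 × 𝒮 × Fin K | lam + γ k ω'.2.1 / probS μ ω'.2.1 ≤ p k ω'.1 ω'.2.1}).indicator
            (fun _ => (1:ℝ)) ω := by
    funext ω
    unfold oracle
    rw [ncard_setOf]
    push_cast
    refine Finset.sum_congr rfl (fun k _ => ?_)
    by_cases h : lam + γ k ω.2.1 / probS μ ω.2.1 ≤ p k ω.1 ω.2.1 <;>
      simp [Set.indicator_apply, Set.mem_setOf_eq, h]
  unfold expSize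
  rw [hfun, integral_finset_sum]
  · refine Finset.sum_congr rfl (fun k _ => ?_)
    rw [integral_indicator_const _ (hBmeas k)]
    simp only [smul_eq_mul, mul_one]
    rw [measureReal_def, measure_decomp μ _ (hBmeas k)]
    refine Finset.sum_congr rfl (fun s _ => ?_)
    unfold phiF
    congr 2
    ext ω
    simp only [Set.mem_inter_iff, Set.mem_setOf_eq]
    constructor
    · rintro ⟨h1, h2⟩; exact ⟨h2 ▸ h1, h2⟩
    · rintro ⟨h1, h2⟩; exact ⟨h2 ▸ h1, h2⟩
  · intro k _
    exact (integrable_const (1:ℝ)).indicator (hBmeas k)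

end Aux2025

theorem statement2
    {𝒳 𝒮 : Type*} [MeasurableSpace 𝒳] [MeasurableSpace 𝒮] [MeasurableSingletonClass 𝒮]
    [Fintype 𝒮] [Nonempty 𝒮] {K : ℕ} (hK : 2 ≤ K)
    (μ : Measure (𝒳 × 𝒮 × Fin K)) (hμ : IsProbabilityMeasure μ)
    (hπ : ∀ s : 𝒮, 0 < probS μ s)
    (p : Fin K → 𝒳 → 𝒮 → ℝ)
    (hpmeas : ∀ k, Measurable fun q : 𝒳 × 𝒮 => p k q.1 q.2)
    (hp01 : ∀ k x s, p k x s ∈ Icc (0:ℝ) 1)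
    (hpsum : ∀ x s, ∑ k : Fin K, p k x s = 1)
    (hlink : ∀ (k : Fin K) (A : Set (𝒳 × 𝒮)), MeasurableSet A →
      (μ {ω | ω.2.2 = k ∧ (ω.1, ω.2.1) ∈ A}).toReal
        = ∫ ω in {ω : 𝒳 × 𝒮 × Fin K | (ω.1, ω.2.1) ∈ A}, p k ω.1 ω.2.1 ∂μ)
    (β : ℝ) (hβ0 : 0 < β) (hβK : β < (K : ℝ))
    (hA1 : Assumption1 μ p)
    (lam : ℝ) (γ : Fin K → 𝒮 → ℝ) (hmem : (lam, γ) ∈ Δset K 𝒮)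
    (hmin : ∀ r ∈ Δset K 𝒮, Hfun μ p β lam γ ≤ Hfun μ p β r.1 r.2)
 :
    expSize μ (oracle μ p lam γ) = β := by
  classical
  obtain ⟨hlam0, hγsum⟩ := hmem
  -- the expected size as a function of the threshold
  set T : ℝ → ℝ := fun t => ∑ k : Fin K, ∑ s : 𝒮, phiF μ p k s (t + γ k s / probS μ s) with hT
  have hphicont : ∀ (k : Fin K) (s : 𝒮), Continuous (fun t => phiF μ p k s t) := by
    intro k s
    have he : (fun t => phiF μ p k s t) = fun t => probS μ s * (1 - Fks μ p k s t) :=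
      funext (phi_eq μ p hpmeas k s (hπ s) (hA1 k s))
    rw [he]
    exact continuous_const.mul (continuous_const.sub (hA1 k s))
  have hTcont : Continuous T := by
    apply continuous_finset_sum
    intro k _
    apply continuous_finset_sum
    intro s _
    exact (hphicont k s).comp (continuous_id.add continuous_const)
  have hsize : expSize μ (oracle μ p lam γ) = T lam := expSize_oracle μ p hpmeas lam γ
  -- master bound on H differences
  have hH : ∀ (lam' : ℝ) (γ' : Fin K → 𝒮 → ℝ),
      Hfun μ p β lam' γ' ≤ Hfun μ p β lam γ + (lam' * β - lam * β)
        - ∑ k : Fin K, ∑ s : 𝒮, ((lam' - lam) + (γ' k s - γ k s) / probS μ s)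
            * phiF μ p k s (lam' + γ' k s / probS μ s) := by
    intro lam' γ'
    have hb : ∀ (k : Fin K) (s : 𝒮),
        condMean μ (fun ω => max (probS μ s * (p k ω.1 ω.2.1 - lam') - γ' k s) 0) s
          ≤ condMean μ (fun ω => max (probS μ s * (p k ω.1 ω.2.1 - lam) - γ k s) 0) s
            - ((lam' - lam) + (γ' k s - γ k s) / probS μ s)
              * phiF μ p k s (lam' + γ' k s / probS μ s) :=
      fun k s => condMean_bound μ p hpmeas hp01 k s (hπ s) lam lam' (γ k s) (γ' k s)
    have hsum : ∑ k : Fin K, ∑ s : 𝒮,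
        condMean μ (fun ω => max (probS μ s * (p k ω.1 ω.2.1 - lam') - γ' k s) 0) s
        ≤ ∑ k : Fin K, ∑ s : 𝒮,
          (condMean μ (fun ω => max (probS μ s * (p k ω.1 ω.2.1 - lam) - γ k s) 0) s
            - ((lam' - lam) + (γ' k s - γ k s) / probS μ s)
              * phiF μ p k s (lam' + γ' k s / probS μ s)) :=
      Finset.sum_le_sum (fun k _ => Finset.sum_le_sum (fun s _ => hb k s))
    simp only [Finset.sum_sub_distrib] at hsum
    unfold Hfun
    linarith
  -- step (a): T(lam + ε) ≤ β for all ε > 0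
  have hstepA : ∀ ε : ℝ, 0 < ε → T (lam + ε) ≤ β := by
    intro ε hε
    have hmemΔ : ((lam + ε, γ) : ℝ × (Fin K → 𝒮 → ℝ)) ∈ Δset K 𝒮 :=
      ⟨by simp; linarith, hγsum⟩
    have h1 := hmin (lam + ε, γ) hmemΔ
    have h2 := hH (lam + ε) γ
    simp only [sub_self, zero_div, add_zero] at h2
    have hDsum : ∑ k : Fin K, ∑ s : 𝒮, (lam + ε - lam)
          * phiF μ p k s (lam + ε + γ k s / probS μ s) = ε * T (lam + ε) := by
      rw [hT]
      rw [Finset.mul_sum]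
      refine Finset.sum_congr rfl (fun k _ => ?_)
      rw [Finset.mul_sum]
      refine Finset.sum_congr rfl (fun s _ => ?_)
      ring_nf
    rw [hDsum] at h2
    have h3 : ε * T (lam + ε) ≤ ε * β := by nlinarith [le_trans h1 h2]
    exact le_of_mul_le_mul_left h3 hε
  -- T lam ≤ β by continuity
  have hTle : T lam ≤ β := by
    have hc : Continuous fun ε : ℝ => T (lam + ε) :=
      hTcont.comp (continuous_const.add continuous_id)
    have htd : Filter.Tendsto (fun ε : ℝ => T (lam + ε)) (nhdsWithin 0 (Set.Ioi 0))
        (nhds (T lam)) := by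
      have := (hc.tendsto 0).mono_left (nhdsWithin_le_nhds (s := Set.Ioi (0:ℝ)))
      simpa using this
    refine le_of_tendsto htd ?_
    exact eventually_nhdsWithin_of_forall (fun ε hε => hstepA ε hε)
  rcases hlam0.eq_or_lt with hlamz | hlampos
  · -- case lam = 0 : derive a contradiction via fairness
    exfalso
    -- fairness inequality from γ-perturbations
    have hfair : ∀ (k : Fin K) (s1 s2 : 𝒮), s1 ≠ s2 → ∀ ε : ℝ, 0 < ε →
        (1 / probS μ s1) * phiF μ p k s1 (lam + (γ k s1 + ε) / probS μ s1)
          ≤ (1 / probS μ s2) * phiF μ p k s2 (lam + (γ k s2 - ε) / probS μ s2) := by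
      intro k s1 s2 hne ε hε
      set γ' : Fin K → 𝒮 → ℝ := fun k' s => γ k' s +
        (if k' = k then ((if s = s1 then ε else 0) - (if s = s2 then ε else 0)) else 0) with hγ'
      have hγ'1 : γ' k s1 = γ k s1 + ε := by simp [hγ', hne]
      have hγ'2 : γ' k s2 = γ k s2 - ε := by simp [hγ', Ne.symm hne]; ring
      have hmemΔ : ((lam, γ') : ℝ × (Fin K → 𝒮 → ℝ)) ∈ Δset K 𝒮 := by
        refine ⟨hlam0, fun k' => ?_⟩
        by_cases hk : k' = k
        · subst hk
          simp only [hγ', if_pos rfl, Finset.sum_add_distrib, Finset.sum_sub_distrib,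
            Finset.sum_ite_eq' Finset.univ, Finset.mem_univ, if_pos]
          rw [hγsum k']
          ring
        · simp [hγ', hk, hγsum k']
      have h1 := hmin (lam, γ') hmemΔ
      have h2 := hH lam γ'
      have hD : ∑ k' : Fin K, ∑ s : 𝒮, ((lam - lam) + (γ' k' s - γ k' s) / probS μ s)
            * phiF μ p k' s (lam + γ' k' s / probS μ s)
          = (ε / probS μ s1) * phiF μ p k s1 (lam + (γ k s1 + ε) / probS μ s1)
            - (ε / probS μ s2) * phiF μ p k s2 (lam + (γ k s2 - ε) / probS μ s2) := by
        rw [Finset.sum_eq_single k]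
        · have hpt : ∀ s : 𝒮, ((lam - lam) + (γ' k s - γ k s) / probS μ s)
              * phiF μ p k s (lam + γ' k s / probS μ s)
              = (if s = s1 then (ε / probS μ s1)
                    * phiF μ p k s1 (lam + (γ k s1 + ε) / probS μ s1) else 0)
                + (if s = s2 then -((ε / probS μ s2)
                    * phiF μ p k s2 (lam + (γ k s2 - ε) / probS μ s2)) else 0) := by
            intro s
            by_cases h1' : s = s1
            · subst h1'
              rw [if_pos rfl, if_neg hne, hγ'1]
              ring_nf
            · by_cases h2' : s = s2
              · subst h2'
                rw [if_neg h1', if_pos rfl, hγ'2]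
                ring_nf
              · have : γ' k s = γ k s := by simp [hγ', h1', h2']
                rw [if_neg h1', if_neg h2', this]
                ring_nf
          rw [Finset.sum_congr rfl (fun s _ => hpt s), Finset.sum_add_distrib,
            Finset.sum_ite_eq' Finset.univ, Finset.sum_ite_eq' Finset.univ]
          simp only [Finset.mem_univ, if_pos]
          ring
        · intro k' _ hk'
          have : ∀ s : 𝒮, γ' k' s = γ k' s := fun s => by simp [hγ', hk']
          refine Finset.sum_eq_zero (fun s _ => ?_)
          rw [this s]
          ring_nf
        · intro h
          exact absurd (Finset.mem_univ k) h
      rw [hD] at h2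
      have h3 : (ε / probS μ s1) * phiF μ p k s1 (lam + (γ k s1 + ε) / probS μ s1)
          - (ε / probS μ s2) * phiF μ p k s2 (lam + (γ k s2 - ε) / probS μ s2) ≤ 0 := by
        have := le_trans h1 h2
        linarith
      have hπ1 := hπ s1
      have hπ2 := hπ s2
      have e1 : (ε / probS μ s1) * phiF μ p k s1 (lam + (γ k s1 + ε) / probS μ s1)
          = ε * ((1 / probS μ s1) * phiF μ p k s1 (lam + (γ k s1 + ε) / probS μ s1)) := by
        ring
      have e2 : (ε / probS μ s2) * phiF μ p k s2 (lam + (γ k s2 - ε) / probS μ s2)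
          = ε * ((1 / probS μ s2) * phiF μ p k s2 (lam + (γ k s2 - ε) / probS μ s2)) := by
        ring
      rw [e1, e2] at h3
      nlinarith
    -- limit ε → 0⁺ : equality of conditional survival at the thresholds
    have hfair0 : ∀ (k : Fin K) (s1 s2 : 𝒮),
        (1 / probS μ s1) * phiF μ p k s1 (lam + γ k s1 / probS μ s1)
          ≤ (1 / probS μ s2) * phiF μ p k s2 (lam + γ k s2 / probS μ s2) := by
      intro k s1 s2
      by_cases hne : s1 = s2
      · subst hne; exact le_refl _
      · have hc1 : Continuous fun ε : ℝ =>
            (1 / probS μ s1) * phiF μ p k s1 (lam + (γ k s1 + ε) / probS μ s1) := by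
          exact continuous_const.mul ((hphicont k s1).comp
            (continuous_const.add ((continuous_const.add continuous_id).div_const _)))
        have hc2 : Continuous fun ε : ℝ =>
            (1 / probS μ s2) * phiF μ p k s2 (lam + (γ k s2 - ε) / probS μ s2) := by
          exact continuous_const.mul ((hphicont k s2).comp
            (continuous_const.add ((continuous_const.sub continuous_id).div_const _)))
        have ht1 : Filter.Tendsto (fun ε : ℝ =>
            (1 / probS μ s1) * phiF μ p k s1 (lam + (γ k s1 + ε) / probS μ s1))
            (nhdsWithin 0 (Set.Ioi 0))
            (nhds ((1 / probS μ s1) * phiF μ p k s1 (lam + γ k s1 / probS μ s1))) := by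
          have := (hc1.tendsto 0).mono_left (nhdsWithin_le_nhds (s := Set.Ioi (0:ℝ)))
          simpa using this
        have ht2 : Filter.Tendsto (fun ε : ℝ =>
            (1 / probS μ s2) * phiF μ p k s2 (lam + (γ k s2 - ε) / probS μ s2))
            (nhdsWithin 0 (Set.Ioi 0))
            (nhds ((1 / probS μ s2) * phiF μ p k s2 (lam + γ k s2 / probS μ s2))) := by
          have := (hc2.tendsto 0).mono_left (nhdsWithin_le_nhds (s := Set.Ioi (0:ℝ)))
          simpa using this
        exact le_of_tendsto_of_tendsto ht1 ht2
          (eventually_nhdsWithin_of_forall (fun ε hε => hfair k s1 s2 hne ε hε))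
    have hlz : lam = 0 := hlamz.symm
    have hψ : ∀ (k : Fin K) (s : 𝒮),
        (1 / probS μ s) * phiF μ p k s (lam + γ k s / probS μ s) = 1 := by
      intro k s
      obtain ⟨s0, hs0⟩ : ∃ s0 : 𝒮, γ k s0 ≤ 0 := by
        by_contra hcon
        push_neg at hcon
        have hpos : 0 < ∑ s : 𝒮, γ k s :=
          Finset.sum_pos (fun s _ => hcon s) Finset.univ_nonempty
        rw [hγsum k] at hpos
        exact lt_irrefl 0 hpos
      have hφ0 : phiF μ p k s0 (lam + γ k s0 / probS μ s0) = probS μ s0 := by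
        unfold phiF
        have hset : {ω : 𝒳 × 𝒮 × Fin K | lam + γ k s0 / probS μ s0 ≤ p k ω.1 ω.2.1}
            ∩ {ω | ω.2.1 = s0} = {ω : 𝒳 × 𝒮 × Fin K | ω.2.1 = s0} := by
          apply Set.inter_eq_right.2
          intro ω _
          have hdiv : γ k s0 / probS μ s0 ≤ 0 :=
            div_nonpos_of_nonpos_of_nonneg hs0 (hπ s0).le
          have ht : lam + γ k s0 / probS μ s0 ≤ 0 := by
            rw [hlz]; linarith
          exact le_trans ht (hp01 k ω.1 ω.2.1).1
        rw [hset]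
        rfl
      have hψ0 : (1 / probS μ s0) * phiF μ p k s0 (lam + γ k s0 / probS μ s0) = 1 := by
        rw [hφ0, one_div, inv_mul_cancel₀ (ne_of_gt (hπ s0))]
      have h1 := hfair0 k s s0
      have h2 := hfair0 k s0 s
      rw [hψ0] at h1 h2
      linarith
    have hTK : T lam = (K : ℝ) := by
      rw [hT]
      have hφπ : ∀ (k : Fin K) (s : 𝒮),
          phiF μ p k s (lam + γ k s / probS μ s) = probS μ s := by
        intro k s
        have h := hψ k s
        have hπs := hπ s
        have hπne : probS μ s ≠ 0 := ne_of_gt hπs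
        rw [one_div, inv_mul_eq_div, div_eq_one_iff_eq hπne] at h
        exact h
      calc (∑ k : Fin K, ∑ s : 𝒮, phiF μ p k s (lam + γ k s / probS μ s))
          = ∑ k : Fin K, ∑ s : 𝒮, probS μ s :=
            Finset.sum_congr rfl (fun k _ => Finset.sum_congr rfl (fun s _ => hφπ k s))
        _ = ∑ _k : Fin K, (1:ℝ) := Finset.sum_congr rfl (fun k _ => sum_probS μ)
        _ = (K:ℝ) := by simp
    rw [hTK] at hTle
    linarith
  · -- case lam > 0 : T lam ≥ β, conclude
    have hstepB : ∀ ε : ℝ, 0 < ε → ε < lam → β ≤ T (lam - ε) := by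
      intro ε hε hεlam
      have hmemΔ : ((lam - ε, γ) : ℝ × (Fin K → 𝒮 → ℝ)) ∈ Δset K 𝒮 :=
        ⟨by simp; linarith, hγsum⟩
      have h1 := hmin (lam - ε, γ) hmemΔ
      have h2 := hH (lam - ε) γ
      simp only [sub_self, zero_div, add_zero] at h2
      have hDsum : ∑ k : Fin K, ∑ s : 𝒮, (lam - ε - lam)
            * phiF μ p k s (lam - ε + γ k s / probS μ s) = -ε * T (lam - ε) := by
        rw [hT]
        rw [Finset.mul_sum]
        refine Finset.sum_congr rfl (fun k _ => ?_)
        rw [Finset.mul_sum]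
        refine Finset.sum_congr rfl (fun s _ => ?_)
        ring_nf
      rw [hDsum] at h2
      have h3 : ε * β ≤ ε * T (lam - ε) := by nlinarith [le_trans h1 h2]
      exact le_of_mul_le_mul_left h3 hε
    have hTge : β ≤ T lam := by
      have hc : Continuous fun ε : ℝ => T (lam - ε) :=
        hTcont.comp (continuous_const.sub continuous_id)
      have htd : Filter.Tendsto (fun ε : ℝ => T (lam - ε)) (nhdsWithin 0 (Set.Ioi 0))
          (nhds (T lam)) := by
        have := (hc.tendsto 0).mono_left (nhdsWithin_le_nhds (s := Set.Ioi (0:ℝ)))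
        simpa using this
      refine ge_of_tendsto htd ?_
      have hIoo : Set.Ioo (0:ℝ) lam ∈ nhdsWithin (0:ℝ) (Set.Ioi 0) :=
        Ioo_mem_nhdsGT_of_mem ⟨le_refl 0, hlampos⟩
      exact Filter.mem_of_superset hIoo (fun ε hε => hstepB ε hε.1 hε.2)
    rw [hsize]
    linarith

end
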